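/- Under the setup of the previous statement, the bias admits the bound |E[T] − aᵀ Σ^{-1} b| ≤ ‖Σ̂^{-1}‖² ‖Σ^{-1}‖ ‖Σ̂ − Σ‖² ‖a‖ ‖b‖, where ‖·‖ denotes the operator norm for matrices and Euclidean norm for vectors. -/

import Mathlib

/-!
Every summand of `T` involves three distinct, independent observations, and the integrand is
trilinear in `u (O i)`, `v (O j)` and the affine function `Σ̂⁻¹ - Σ̂⁻¹ (S (O l) - Σ̂) Σ̂⁻¹` of
`S (O l)`; so each summand has mean `aᵀ M b` with `M = Σ̂⁻¹ - Σ̂⁻¹ (Σ - Σ̂) Σ̂⁻¹`, and the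
normalisation `(n - 3)! / n!` is the reciprocal of the number of ordered distinct triples.
Hence `T = aᵀ M b`. The matrix `M` is the first-order Neumann expansion of `Σ⁻¹` around `Σ̂`,
and its error is exactly the second-order term
`M - Σ⁻¹ = -Σ⁻¹ (Σ̂ - Σ) Σ̂⁻¹ (Σ̂ - Σ) Σ̂⁻¹`, whose operator norm is at most
`‖Σ̂⁻¹‖² ‖Σ⁻¹‖ ‖Σ̂ - Σ‖²`.
-/

open MeasureTheory ProbabilityTheory Matrix Finset

section Deterministic

theorem neumann_approx_sub_inv {R : Type*} [Ring R] {x y x' y' : R} (hx : x' * x = 1)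
    (hy : y * y' = 1) :
    y' - y' * (x - y) * y' - x' = -(x' * (y - x) * y' * (y - x) * y') := by
  have hx' : ∀ z, x' * (x * z) = z := fun z => by rw [← mul_assoc, hx, one_mul]
  simp only [mul_sub, sub_mul, mul_assoc, hx', hy, mul_one]
  abel

variable {ι : Type*} [Fintype ι] [DecidableEq ι]

theorem abs_dotProduct_mulVec_le (A : Matrix ι ι ℝ) (a b : ι → ℝ) :
    |a ⬝ᵥ A *ᵥ b| ≤ ‖toEuclideanCLM (𝕜 := ℝ) A‖ * ‖(WithLp.equiv 2 (ι → ℝ)).symm a‖ *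
      ‖(WithLp.equiv 2 (ι → ℝ)).symm b‖ := by
  set a₂ := (WithLp.equiv 2 (ι → ℝ)).symm a
  set b₂ := (WithLp.equiv 2 (ι → ℝ)).symm b
  have hinner : a ⬝ᵥ A *ᵥ b = inner ℝ a₂ (toEuclideanCLM (𝕜 := ℝ) A b₂) := by
    simp [a₂, b₂, PiLp.inner_apply, dotProduct, mul_comm]
  calc |a ⬝ᵥ A *ᵥ b| ≤ ‖a₂‖ * ‖toEuclideanCLM (𝕜 := ℝ) A b₂‖ :=
        hinner ▸ abs_real_inner_le_norm _ _
    _ ≤ ‖a₂‖ * (‖toEuclideanCLM (𝕜 := ℝ) A‖ * ‖b₂‖) := by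
        gcongr; exact (toEuclideanCLM (𝕜 := ℝ) A).le_opNorm _
    _ = _ := by ring

theorem abs_dotProduct_neumann_sub_le {Sig Shat : Matrix ι ι ℝ} (hSig : IsUnit Sig)
    (hShat : IsUnit Shat) (a b : ι → ℝ) :
    |a ⬝ᵥ (Shat⁻¹ - Shat⁻¹ * (Sig - Shat) * Shat⁻¹) *ᵥ b - a ⬝ᵥ Sig⁻¹ *ᵥ b| ≤
      ‖toEuclideanCLM (𝕜 := ℝ) Shat⁻¹‖ ^ 2 * ‖toEuclideanCLM (𝕜 := ℝ) Sig⁻¹‖ *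
        ‖toEuclideanCLM (𝕜 := ℝ) (Shat - Sig)‖ ^ 2 *
        ‖(WithLp.equiv 2 (ι → ℝ)).symm a‖ * ‖(WithLp.equiv 2 (ι → ℝ)).symm b‖ := by
  rw [← dotProduct_sub, ← sub_mulVec, neumann_approx_sub_inv
    (nonsing_inv_mul Sig ((isUnit_iff_isUnit_det Sig).mp hSig))
    (mul_nonsing_inv Shat ((isUnit_iff_isUnit_det Shat).mp hShat))]
  refine (abs_dotProduct_mulVec_le _ a b).trans ?_
  gcongr
  simp only [map_neg, norm_neg, map_mul]
  set P := toEuclideanCLM (𝕜 := ℝ) Shat⁻¹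
  set Q := toEuclideanCLM (𝕜 := ℝ) Sig⁻¹
  set D := toEuclideanCLM (𝕜 := ℝ) (Shat - Sig)
  calc ‖Q * D * P * D * P‖ ≤ ‖Q * D * P‖ * ‖D‖ * ‖P‖ := norm_mul₃_le
    _ ≤ ‖Q‖ * ‖D‖ * ‖P‖ * ‖D‖ * ‖P‖ := by gcongr; exact norm_mul₃_le
    _ = ‖P‖ ^ 2 * ‖Q‖ * ‖D‖ ^ 2 := by ring

end Deterministic

theorem Matrix.dotProduct_mulVec_eq_sum {m n R : Type*} [Fintype m] [Fintype n]
    [CommSemiring R] (x : m → R) (A : Matrix m n R) (y : n → R) :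
    x ⬝ᵥ A *ᵥ y = ∑ r, ∑ s, x r * y s * A r s := by
  simp only [dotProduct, mulVec, mul_sum]
  exact sum_congr rfl fun r _ => sum_congr rfl fun s _ => by ring

theorem Matrix.mul_mul_apply_eq_sum {l m n o R : Type*} [Fintype m] [Fintype n]
    [CommSemiring R] (A : Matrix l m R) (B : Matrix m n R) (C : Matrix n o R) (r : l) (s : o) :
    (A * B * C) r s = ∑ c, ∑ d, A r c * B c d * C d s := by
  simp only [mul_apply, sum_mul]
  exact sum_comm

section Triples

def distinctTriples (n : ℕ) : Finset (Fin n × Fin n × Fin n) :=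
  univ.filter fun p => p.1 ≠ p.2.1 ∧ p.1 ≠ p.2.2 ∧ p.2.1 ≠ p.2.2

def distinctTriplesEquivEmbedding (n : ℕ) : distinctTriples n ≃ (Fin 3 ↪ Fin n) where
  toFun p := ⟨![p.1.1, p.1.2.1, p.1.2.2], by
    obtain ⟨⟨x, y, z⟩, hp⟩ := p
    simp only [distinctTriples, mem_filter, mem_univ, true_and] at hp
    intro r s h
    fin_cases r <;> fin_cases s <;> simp_all [eq_comm]⟩
  invFun f := ⟨(f 0, f 1, f 2), by simp [distinctTriples]⟩
  left_inv _ := rfl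
  right_inv f := by ext r; fin_cases r <;> rfl

theorem card_distinctTriples (n : ℕ) : #(distinctTriples n) = n.descFactorial 3 := by
  rw [← Fintype.card_coe, Fintype.card_congr (distinctTriplesEquivEmbedding n),
    Fintype.card_embedding_eq, Fintype.card_fin, Fintype.card_fin]

theorem integral_average_distinctTriples {Ω : Type*} [MeasurableSpace Ω] {μ : Measure Ω}
    {n : ℕ} (hn : 3 ≤ n) {g : Fin n × Fin n × Fin n → Ω → ℝ} {c : ℝ}
    (hg : ∀ p ∈ distinctTriples n, Integrable (g p) μ)
    (hc : ∀ p ∈ distinctTriples n, ∫ ω, g p ω ∂μ = c) :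
    ∫ ω, ((n - 3).factorial / n.factorial : ℝ) * ∑ p ∈ distinctTriples n, g p ω ∂μ = c := by
  have hcard : ((n - 3).factorial / n.factorial : ℝ) * #(distinctTriples n) = 1 := by
    rw [card_distinctTriples, div_mul_eq_mul_div, ← Nat.cast_mul,
      Nat.factorial_mul_descFactorial hn, div_self (by positivity)]
  rw [integral_const_mul, integral_finsetSum _ hg, sum_congr rfl hc, sum_const, nsmul_eq_mul,
    ← mul_assoc, hcard, one_mul]

end Triples

section Independent

variable {Ω α ι : Type*} [MeasurableSpace Ω] [MeasurableSpace α] {μ : Measure Ω}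
  {O : ι → Ω → α} {i j l : ι}

theorem ProbabilityTheory.iIndepFun.indepFun_comp_mul_comp {f g h : α → ℝ}
    (hO : ∀ i, Measurable (O i)) (hind : iIndepFun O μ) (hil : i ≠ l) (hjl : j ≠ l)
    (hf : Measurable f) (hg : Measurable g) (hh : Measurable h) :
    IndepFun (fun ω => f (O i ω) * g (O j ω)) (fun ω => h (O l ω)) μ :=
  (hind.indepFun_prodMk hO i j l hil hjl).comp
    ((hf.comp measurable_fst).mul (hg.comp measurable_snd)) hh

section ThreeFunctions

variable {f g h : α → ℝ} (hO : ∀ i, Measurable (O i)) (hind : iIndepFun O μ) (hij : i ≠ j)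
  (hil : i ≠ l) (hjl : j ≠ l) (hf : Measurable f) (hg : Measurable g) (hh : Measurable h)
  (hfi : Integrable (fun ω => f (O i ω)) μ) (hgj : Integrable (fun ω => g (O j ω)) μ)
  (hhl : Integrable (fun ω => h (O l ω)) μ)
include hO hind hij hil hjl hf hg hh hfi hgj hhl

theorem ProbabilityTheory.iIndepFun.integrable_comp_mul_comp_mul_comp :
    Integrable (fun ω => f (O i ω) * g (O j ω) * h (O l ω)) μ :=
  (hind.indepFun_comp_mul_comp hO hil hjl hf hg hh).integrable_mul
    (((hind.indepFun hij).comp hf hg).integrable_mul hfi hgj) hhl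

theorem ProbabilityTheory.iIndepFun.integral_comp_mul_comp_mul_comp :
    ∫ ω, f (O i ω) * g (O j ω) * h (O l ω) ∂μ =
      (∫ ω, f (O i ω) ∂μ) * (∫ ω, g (O j ω) ∂μ) * ∫ ω, h (O l ω) ∂μ := by
  have hfg : IndepFun (fun ω => f (O i ω)) (fun ω => g (O j ω)) μ :=
    (hind.indepFun hij).comp hf hg
  rw [← hfg.integral_mul_eq_mul_integral hfi.aestronglyMeasurable hgj.aestronglyMeasurable]
  exact (hind.indepFun_comp_mul_comp hO hil hjl hf hg hh).integral_mul_eq_mul_integral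
    (hfg.integrable_mul hfi hgj).aestronglyMeasurable hhl.aestronglyMeasurable

end ThreeFunctions

section Bilinear

variable {κ : Type*} [Fintype κ] {u v : α → κ → ℝ} {R : α → Matrix κ κ ℝ}
  (hO : ∀ i, Measurable (O i)) (hind : iIndepFun O μ) (hij : i ≠ j) (hil : i ≠ l) (hjl : j ≠ l)
  (hu : ∀ r, Measurable fun x => u x r) (hv : ∀ s, Measurable fun x => v x s)
  (hR : ∀ r s, Measurable fun x => R x r s)
  (hui : ∀ r, Integrable (fun ω => u (O i ω) r) μ)
  (hvj : ∀ s, Integrable (fun ω => v (O j ω) s) μ)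
  (hRl : ∀ r s, Integrable (fun ω => R (O l ω) r s) μ)
include hO hind hij hil hjl hu hv hR hui hvj hRl

theorem ProbabilityTheory.iIndepFun.integrable_dotProduct_mulVec :
    Integrable (fun ω => u (O i ω) ⬝ᵥ R (O l ω) *ᵥ v (O j ω)) μ := by
  simp only [dotProduct_mulVec_eq_sum]
  exact integrable_finsetSum _ fun r _ => integrable_finsetSum _ fun s _ =>
    hind.integrable_comp_mul_comp_mul_comp hO hij hil hjl (hu r) (hv s) (hR r s)
      (hui r) (hvj s) (hRl r s)

theorem ProbabilityTheory.iIndepFun.integral_dotProduct_mulVec {a b : κ → ℝ}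
    {M : Matrix κ κ ℝ} (ha : ∀ r, ∫ ω, u (O i ω) r ∂μ = a r)
    (hb : ∀ s, ∫ ω, v (O j ω) s ∂μ = b s) (hM : ∀ r s, ∫ ω, R (O l ω) r s ∂μ = M r s) :
    ∫ ω, u (O i ω) ⬝ᵥ R (O l ω) *ᵥ v (O j ω) ∂μ = a ⬝ᵥ M *ᵥ b := by
  have hint r s := hind.integrable_comp_mul_comp_mul_comp hO hij hil hjl (hu r) (hv s)
    (hR r s) (hui r) (hvj s) (hRl r s)
  simp only [dotProduct_mulVec_eq_sum]
  rw [integral_finsetSum _ fun r _ => integrable_finsetSum _ fun s _ => hint r s]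
  refine sum_congr rfl fun r _ => ?_
  rw [integral_finsetSum _ fun s _ => hint r s]
  refine sum_congr rfl fun s _ => ?_
  rw [hind.integral_comp_mul_comp_mul_comp hO hij hil hjl (hu r) (hv s) (hR r s) (hui r)
    (hvj s) (hRl r s), ha, hb, hM]

end Bilinear

end Independent

section NeumannEntries

variable {Ω α κ : Type*} [MeasurableSpace Ω] [MeasurableSpace α] {μ : Measure Ω} [Fintype κ]

theorem measurable_sub_mul_sub_mul_apply {X : α → Matrix κ κ ℝ}
    (hX : ∀ c d, Measurable fun x => X x c d) (A B C D : Matrix κ κ ℝ) (r s : κ) :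
    Measurable fun x => (A - B * (X x - C) * D) r s := by
  simp only [Matrix.sub_apply, mul_mul_apply_eq_sum]
  fun_prop

theorem integrable_sub_mul_sub_mul_apply [IsFiniteMeasure μ] {X : Ω → Matrix κ κ ℝ}
    (hX : ∀ c d, Integrable (fun ω => X ω c d) μ) (A B C D : Matrix κ κ ℝ) (r s : κ) :
    Integrable (fun ω => (A - B * (X ω - C) * D) r s) μ := by
  simp only [Matrix.sub_apply, mul_mul_apply_eq_sum]
  exact (integrable_const _).sub (integrable_finsetSum _ fun c _ => integrable_finsetSum _
    fun d _ => (((hX c d).sub (integrable_const _)).const_mul _).mul_const _)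

theorem integral_sub_mul_sub_mul_apply [IsProbabilityMeasure μ] {X : Ω → Matrix κ κ ℝ}
    {Xbar : Matrix κ κ ℝ} (hX : ∀ c d, Integrable (fun ω => X ω c d) μ)
    (hXbar : ∀ c d, ∫ ω, X ω c d ∂μ = Xbar c d) (A B C D : Matrix κ κ ℝ) (r s : κ) :
    ∫ ω, (A - B * (X ω - C) * D) r s ∂μ = (A - B * (Xbar - C) * D) r s := by
  have hterm c d : Integrable (fun ω => B r c * (X ω c d - C c d) * D d s) μ :=
    (((hX c d).sub (integrable_const _)).const_mul _).mul_const _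
  simp only [Matrix.sub_apply, mul_mul_apply_eq_sum]
  rw [integral_sub (integrable_const _) (integrable_finsetSum _ fun c _ =>
    integrable_finsetSum _ fun d _ => hterm c d), integral_const, probReal_univ, one_smul,
    integral_finsetSum _ fun c _ => integrable_finsetSum _ fun d _ => hterm c d]
  congr 1
  refine sum_congr rfl fun c _ => ?_
  rw [integral_finsetSum _ fun d _ => hterm c d]
  refine sum_congr rfl fun d _ => ?_
  rw [integral_mul_const, integral_const_mul, integral_sub (hX c d) (integrable_const _),
    integral_const, probReal_univ, one_smul, hXbar]

end NeumannEntries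

theorem stmt8_general {Ω α : Type*} [MeasurableSpace Ω] [MeasurableSpace α]
    (μ : Measure Ω) [IsProbabilityMeasure μ]
    {n k : ℕ} (hn : 3 ≤ n)
    (O : Fin n → Ω → α) (hOmeas : ∀ i, Measurable (O i))
    (hindep : iIndepFun O μ)
    (u v : α → Fin k → ℝ)
    (hu : ∀ l, Measurable fun x => u x l) (hv : ∀ l, Measurable fun x => v x l)
    (hu2 : ∀ i l, MemLp (fun ω => u (O i ω) l) 2 μ)
    (hv2 : ∀ i l, MemLp (fun ω => v (O i ω) l) 2 μ)
    (a b : Fin k → ℝ)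
    (ha : ∀ i l, ∫ ω, u (O i ω) l ∂μ = a l) (hb : ∀ i l, ∫ ω, v (O i ω) l ∂μ = b l)
    (S : α → Matrix (Fin k) (Fin k) ℝ)
    (hSmeas : ∀ l m, Measurable fun x => S x l m)
    (hSint : ∀ i l m, Integrable (fun ω => S (O i ω) l m) μ)
    (Sig : Matrix (Fin k) (Fin k) ℝ) (hSig : ∀ i l m, ∫ ω, S (O i ω) l m ∂μ = Sig l m)
    (hSigUnit : IsUnit Sig)
    (Shat : Matrix (Fin k) (Fin k) ℝ) (hShatUnit : IsUnit Shat) :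
    let T : ℝ := ∫ ω, ((Nat.factorial (n - 3) : ℝ) / (Nat.factorial n : ℝ)) *
        ∑ p ∈ Finset.univ.filter
            (fun p : Fin n × Fin n × Fin n => p.1 ≠ p.2.1 ∧ p.1 ≠ p.2.2 ∧ p.2.1 ≠ p.2.2),
          u (O p.1 ω) ⬝ᵥ
            (Shat⁻¹ - Shat⁻¹ * (S (O p.2.2 ω) - Shat) * Shat⁻¹).mulVec (v (O p.2.1 ω)) ∂μ
    |T - a ⬝ᵥ Sig⁻¹.mulVec b| ≤
      ‖Matrix.toEuclideanCLM (𝕜 := ℝ) Shat⁻¹‖ ^ 2 * ‖Matrix.toEuclideanCLM (𝕜 := ℝ) Sig⁻¹‖ *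
        ‖Matrix.toEuclideanCLM (𝕜 := ℝ) (Shat - Sig)‖ ^ 2 *
        ‖(WithLp.equiv 2 (Fin k → ℝ)).symm a‖ * ‖(WithLp.equiv 2 (Fin k → ℝ)).symm b‖ := by
  intro T
  set R : α → Matrix (Fin k) (Fin k) ℝ := fun x => Shat⁻¹ - Shat⁻¹ * (S x - Shat) * Shat⁻¹
  have hu1 i r : Integrable (fun ω => u (O i ω) r) μ := (hu2 i r).integrable one_le_two
  have hv1 i r : Integrable (fun ω => v (O i ω) r) μ := (hv2 i r).integrable one_le_two
  have hRmeas r s : Measurable fun x => R x r s :=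
    measurable_sub_mul_sub_mul_apply hSmeas Shat⁻¹ Shat⁻¹ Shat Shat⁻¹ r s
  have hRint i r s : Integrable (fun ω => R (O i ω) r s) μ :=
    integrable_sub_mul_sub_mul_apply (hSint i) Shat⁻¹ Shat⁻¹ Shat Shat⁻¹ r s
  have hT : T = a ⬝ᵥ (Shat⁻¹ - Shat⁻¹ * (Sig - Shat) * Shat⁻¹) *ᵥ b := by
    refine integral_average_distinctTriples (g := fun p ω => u (O p.1 ω) ⬝ᵥ R (O p.2.2 ω) *ᵥ
      v (O p.2.1 ω)) hn (fun p hp => ?_) (fun p hp => ?_)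
    all_goals obtain ⟨-, hij, hil, hjl⟩ := mem_filter.mp hp
    · exact hindep.integrable_dotProduct_mulVec hOmeas hij hil hjl hu hv hRmeas (hu1 _)
        (hv1 _) (hRint _)
    · exact hindep.integral_dotProduct_mulVec hOmeas hij hil hjl hu hv hRmeas (hu1 _) (hv1 _)
        (hRint _) (ha _) (hb _)
        (integral_sub_mul_sub_mul_apply (hSint _) (hSig _) Shat⁻¹ Shat⁻¹ Shat Shat⁻¹)
  rw [hT]
  exact abs_dotProduct_neumann_sub_le hSigUnit hShatUnit a b

theorem stmt8 {Ω α : Type*} [MeasurableSpace Ω] [MeasurableSpace α]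
    (μ : Measure Ω) [IsProbabilityMeasure μ]
    {n k : ℕ} (hn : 3 ≤ n)
    (O : Fin n → Ω → α) (hOmeas : ∀ i, Measurable (O i))
    (hindep : iIndepFun O μ)
    (hident : ∀ i j, IdentDistrib (O i) (O j) μ μ)
    (u v : α → Fin k → ℝ)
    (hu : ∀ l, Measurable fun x => u x l) (hv : ∀ l, Measurable fun x => v x l)
    (hu2 : ∀ i l, MemLp (fun ω => u (O i ω) l) 2 μ)
    (hv2 : ∀ i l, MemLp (fun ω => v (O i ω) l) 2 μ)
    (a b : Fin k → ℝ)
    (ha : ∀ i l, ∫ ω, u (O i ω) l ∂μ = a l) (hb : ∀ i l, ∫ ω, v (O i ω) l ∂μ = b l)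
    (S : α → Matrix (Fin k) (Fin k) ℝ)
    (hSmeas : ∀ l m, Measurable fun x => S x l m)
    (hSint : ∀ i l m, Integrable (fun ω => S (O i ω) l m) μ)
    (Sig : Matrix (Fin k) (Fin k) ℝ) (hSig : ∀ i l m, ∫ ω, S (O i ω) l m ∂μ = Sig l m)
    (hSigUnit : IsUnit Sig)
    (Shat : Matrix (Fin k) (Fin k) ℝ) (hShatUnit : IsUnit Shat) :
    let T : ℝ := ∫ ω, ((Nat.factorial (n - 3) : ℝ) / (Nat.factorial n : ℝ)) *
        ∑ p ∈ Finset.univ.filter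
            (fun p : Fin n × Fin n × Fin n => p.1 ≠ p.2.1 ∧ p.1 ≠ p.2.2 ∧ p.2.1 ≠ p.2.2),
          u (O p.1 ω) ⬝ᵥ
            (Shat⁻¹ - Shat⁻¹ * (S (O p.2.2 ω) - Shat) * Shat⁻¹).mulVec (v (O p.2.1 ω)) ∂μ
    |T - a ⬝ᵥ Sig⁻¹.mulVec b| ≤
      ‖Matrix.toEuclideanCLM (𝕜 := ℝ) Shat⁻¹‖ ^ 2 * ‖Matrix.toEuclideanCLM (𝕜 := ℝ) Sig⁻¹‖ *
        ‖Matrix.toEuclideanCLM (𝕜 := ℝ) (Shat - Sig)‖ ^ 2 *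
        ‖(WithLp.equiv 2 (Fin k → ℝ)).symm a‖ * ‖(WithLp.equiv 2 (Fin k → ℝ)).symm b‖ :=
  stmt8_general μ hn O hOmeas hindep u v hu hv hu2 hv2 a b ha hb S hSmeas hSint Sig hSig hSigUnit
    Shat hShatUnit
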